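/- arXiv:1708.07285 — 4 statements merged into one kernel-verified Lean document; each statement's English description precedes it below -/
import Mathlib

section
/- Stationary-defender blocking invariant: let (α_t)_{t∈ℕ} be a play, let D' ⊆ R be a set of agents that never move (α_t(d) = α_0(d) for all d ∈ D' and all t), and let B = { α_0(d) : d ∈ D' } be the set of vertices they occupy. Then for every agent a ∉ D' and every time step t, the vertex α_t(a) lies outside B and is reachable from α_0(a) inside the subgraph of G induced on V \ B. -/
/-- Configuration `β` is obtained from configuration `α` by a legal joint move in the
APP movement model on graph `G`:
(i) each agent stays or moves to an adjacent vertex;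
(ii) an agent may move into a vertex currently occupied by another agent only if that
agent vacates it at the same step;
(iii) no pair of agents swaps across an edge;
(iv) no two moving agents enter the same vertex. -/
def LegalMove {V R : Type*} (G : SimpleGraph V) (α β : R → V) : Prop :=
  (∀ r, β r = α r ∨ G.Adj (α r) (β r)) ∧
  (∀ r s, r ≠ s → β r ≠ α r → β r = α s → β s ≠ α s) ∧
  (∀ r s, r ≠ s → ¬(β r = α s ∧ β s = α r)) ∧
  (∀ r s, r ≠ s → β r ≠ α r → β s ≠ α s → β r ≠ β s)

/-- A play in the APP movement model: the initial configuration is injective and each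
successive configuration is obtained by a legal joint move. -/
def IsPlay {V R : Type*} (G : SimpleGraph V) (α : ℕ → R → V) : Prop :=
  Function.Injective (α 0) ∧ ∀ t, LegalMove G (α t) (α (t + 1))

/-- The subgraph of `G` induced on `V \ B`: edges of `G` with both endpoints outside `B`. -/
def avoidGraph {V : Type*} (G : SimpleGraph V) (B : Set V) : SimpleGraph V where
  Adj u v := G.Adj u v ∧ u ∉ B ∧ v ∉ B
  symm := ⟨fun u v ⟨huv, hu, hv⟩ => ⟨huv.symm, hv, hu⟩⟩
  loopless := ⟨fun v ⟨hvv, _, _⟩ => G.loopless.irrefl v hvv⟩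

/-!
A stationary agent never vacates its vertex, so rule (ii) forbids any other agent to step
onto it. Hence an agent that starts outside `B` stays outside `B` forever, and each of its
moves is an edge of `G` between two vertices outside `B`.
-/

namespace LegalMove

variable {V R : Type*} {G : SimpleGraph V} {α β : R → V}

theorem ne_of_stays (hm : LegalMove G α β) {a d : R} (had : a ≠ d) (hd : β d = α d)
    (ha : β a ≠ α a) : β a ≠ α d :=
  fun h => hm.2.1 a d had ha h hd

theorem notMem_of_stationary {B : Set V} {a : R}
    (hB : ∀ v ∈ B, ∃ d, d ≠ a ∧ α d = v ∧ β d = v) (hm : LegalMove G α β) (ha : α a ∉ B) :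
    β a ∉ B := by
  intro haB
  obtain ⟨d, hda, hdα, hdβ⟩ := hB _ haB
  by_cases hstay : β a = α a
  · exact ha (hstay ▸ haB)
  · exact hm.ne_of_stays hda.symm (hdβ.trans hdα.symm) hstay hdα.symm

theorem avoidGraph_reachable_of_stationary {B : Set V} {a : R}
    (hB : ∀ v ∈ B, ∃ d, d ≠ a ∧ α d = v ∧ β d = v) (hm : LegalMove G α β) (ha : α a ∉ B) :
    (avoidGraph G B).Reachable (α a) (β a) := by
  rcases hm.1 a with hstay | hadj
  · rw [hstay]
  · exact SimpleGraph.Adj.reachable ⟨hadj, ha, hm.notMem_of_stationary hB ha⟩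

end LegalMove

theorem stationary_defender_blocking_general {V R : Type*}
    (G : SimpleGraph V) (α : ℕ → R → V) (h : IsPlay G α)
    (D' : Set R) (hstat : ∀ d ∈ D', ∀ t, α t d = α 0 d)
    (B : Set V) (hB : B = α 0 '' D')
    (a : R) (ha : a ∉ D') (t : ℕ) :
    α t a ∉ B ∧ (avoidGraph G B).Reachable (α 0 a) (α t a) := by
  subst hB
  have held : ∀ t, ∀ v ∈ α 0 '' D', ∃ d, d ≠ a ∧ α t d = v ∧ α (t + 1) d = v := by
    rintro t _ ⟨d, hd, rfl⟩
    exact ⟨d, fun hda => ha (hda ▸ hd), hstat d hd t, hstat d hd (t + 1)⟩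
  induction t with
  | zero => exact ⟨mt h.1.mem_set_image.1 ha, .refl _⟩
  | succ t ih =>
    exact ⟨(h.2 t).notMem_of_stationary (held t) ih.1,
      ih.2.trans ((h.2 t).avoidGraph_reachable_of_stationary (held t) ih.1)⟩

/-- Stationary-defender blocking invariant: if the agents in `D'` never move and `B` is
the set of vertices they occupy, then every other agent always stays outside `B` and is
reachable from its initial position inside the subgraph of `G` induced on `V \ B`. -/
theorem stationary_defender_blocking {V R : Type*} [Fintype R]
    (G : SimpleGraph V) (α : ℕ → R → V) (h : IsPlay G α)
    (D' : Set R) (hstat : ∀ d ∈ D', ∀ t, α t d = α 0 d)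
    (B : Set V) (hB : B = α 0 '' D')
    (a : R) (ha : a ∉ D') (t : ℕ) :
    α t a ∉ B ∧ (avoidGraph G B).Reachable (α 0 a) (α t a) :=
  stationary_defender_blocking_general G α h D' hstat B hB a ha t
end

section
/- Bottleneck blocking (separator) corollary: let (α_t)_{t∈ℕ} be a play, let D' ⊆ R be a set of agents that never move (α_t(d) = α_0(d) for all d ∈ D' and all t), and let B = { α_0(d) : d ∈ D' }. If a vertex v is not reachable from α_0(a) in the subgraph of G induced on V \ B (i.e., every path in G from α_0(a) to v passes through B), where a ∉ D', then α_t(a) ≠ v for every time step t; the agent a never reaches v. -/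
namespace LegalMove

variable {V R : Type*} {G : SimpleGraph V} {α β : R → V}

theorem ne_of_stays_s6 (h : LegalMove G α β) {r s : R} (hrs : r ≠ s) (hr : β r ≠ α r)
    (hs : β s = α s) : β r ≠ α s :=
  fun hrs' => h.2.1 r s hrs hr hrs' hs

theorem avoidGraph_reachable (h : LegalMove G α β) {B : Set V} (r : R) (hα : α r ∉ B)
    (hβ : β r ∉ B) : (avoidGraph G B).Reachable (α r) (β r) := by
  rcases h.1 r with hstay | hadj
  · rw [hstay]
  · exact SimpleGraph.Adj.reachable ⟨hadj, hα, hβ⟩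

end LegalMove

section Play

variable {V R : Type*} {G : SimpleGraph V} {α : ℕ → R → V}

theorem IsPlay.notMem_image_of_stationary (h : IsPlay G α) {D : Set R}
    (hstat : ∀ d ∈ D, ∀ t, α t d = α 0 d) {a : R} (ha : a ∉ D) (t : ℕ) :
    α t a ∉ α 0 '' D := by
  induction t with
  | zero =>
    rintro ⟨d, hd, hda⟩
    exact ha (h.1 hda ▸ hd)
  | succ t ih =>
    rintro ⟨d, hd, hda⟩
    have had : a ≠ d := fun had => ha (had ▸ hd)
    have hmoved : α (t + 1) a ≠ α t a := fun hstay => ih (hstay ▸ ⟨d, hd, hda⟩)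
    refine (h.2 t).ne_of_stays_s6 had hmoved ?_ ?_
    · rw [hstat d hd (t + 1), hstat d hd t]
    · rw [hstat d hd t, hda]

theorem avoidGraph_reachable_of_forall_notMem (hmove : ∀ t, LegalMove G (α t) (α (t + 1)))
    {B : Set V} {a : R} (hB : ∀ t, α t a ∉ B) (t : ℕ) :
    (avoidGraph G B).Reachable (α 0 a) (α t a) := by
  induction t with
  | zero => rfl
  | succ t ih => exact ih.trans ((hmove t).avoidGraph_reachable a (hB t) (hB (t + 1)))

end Play

theorem bottleneck_blocking_general {V R : Type*}
    (G : SimpleGraph V) (α : ℕ → R → V) (h : IsPlay G α)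
    (D' : Set R) (hstat : ∀ d ∈ D', ∀ t, α t d = α 0 d)
    (B : Set V) (hB : B = α 0 '' D')
    (a : R) (ha : a ∉ D') (v : V)
    (hsep : ¬ (avoidGraph G B).Reachable (α 0 a) v) (t : ℕ) :
    α t a ≠ v := by
  subst hB
  have hreach := avoidGraph_reachable_of_forall_notMem h.2
    (h.notMem_image_of_stationary hstat ha) t
  exact fun hv => hsep (hv ▸ hreach)

/-- Bottleneck blocking (separator) corollary: if the agents in `D'` never move, `B` is the
set of vertices they occupy, and `v` is not reachable from `α 0 a` in the subgraph of `G`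
induced on `V \ B`, then the agent `a ∉ D'` never reaches `v`. -/
theorem bottleneck_blocking {V R : Type*} [Fintype R]
    (G : SimpleGraph V) (α : ℕ → R → V) (h : IsPlay G α)
    (D' : Set R) (hstat : ∀ d ∈ D', ∀ t, α t d = α 0 d)
    (B : Set V) (hB : B = α 0 '' D')
    (a : R) (ha : a ∉ D') (v : V)
    (hsep : ¬ (avoidGraph G B).Reachable (α 0 a) v) (t : ℕ) :
    α t a ≠ v :=
  bottleneck_blocking_general G α h D' hstat B hB a ha v hsep t
end

section
/- Legality of train-like movement: let α : R → V be an injective configuration, let v_0, v_1, …, v_k be pairwise distinct vertices of G with v_{i−1} adjacent to v_i for 1 ≤ i ≤ k, let a_1, …, a_k be pairwise distinct agents with α(a_i) = v_{i−1} for 1 ≤ i ≤ k, and suppose v_k is not occupied by any agent in α. Define β by β(a_i) = v_i for 1 ≤ i ≤ k and β(r) = α(r) for every other agent r. Then β is obtained from α by a legal joint move (satisfying the adjacency, vacancy/vacating, no-swap, and no-collision rules) and β is injective. -/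
/-- Legality of train-like movement: pairwise distinct vertices `v 0, …, v k` forming a
path in `G`, with pairwise distinct agents `a 1, …, a k` occupying `v 0, …, v (k-1)` and
`v k` unoccupied; simultaneously shifting every agent one step forward along the path is
a legal joint move and yields an injective configuration. -/
theorem train_move_legal {V R : Type*} [Fintype R]
    (G : SimpleGraph V) (α β : R → V) (hα : Function.Injective α)
    (k : ℕ) (v : Fin (k + 1) → V) (hv : Function.Injective v)
    (hadj : ∀ i : Fin k, G.Adj (v i.castSucc) (v i.succ))
    (a : Fin k → R) (ha : Function.Injective a)
    (hpos : ∀ i : Fin k, α (a i) = v i.castSucc)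
    (hfree : ∀ r : R, α r ≠ v (Fin.last k))
    (hβa : ∀ i : Fin k, β (a i) = v i.succ)
    (hβr : ∀ r : R, (∀ i : Fin k, r ≠ a i) → β r = α r) :
    LegalMove G α β ∧ Function.Injective β := by
  classical
  have hne_succ_cast : ∀ i : Fin k, v i.succ ≠ v i.castSucc := by
    intro i h
    have h2 := hv h
    have h3 : (i : ℕ) + 1 = (i : ℕ) := by simpa [Fin.ext_iff] using h2
    omega
  have hvij : ∀ i j : Fin k, v i.succ = v j.castSucc → (i : ℕ) + 1 = (j : ℕ) := by
    intro i j h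
    have h2 := hv h
    simpa [Fin.ext_iff] using h2
  have htarget : ∀ (i : Fin k) (s : R), α s = v i.succ →
      ∃ j : Fin k, s = a j := by
    intro i s hs
    by_cases h : (i : ℕ) + 1 < k
    · refine ⟨⟨(i : ℕ) + 1, h⟩, ?_⟩
      have hc : (⟨(i : ℕ) + 1, h⟩ : Fin k).castSucc = i.succ := by
        simp [Fin.ext_iff]
      apply hα
      rw [hpos, hc, hs]
    · exfalso
      have hik : (i : ℕ) + 1 = k := by have := i.isLt; omega
      have hl : i.succ = Fin.last k := by simp [Fin.ext_iff, hik]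
      exact hfree s (by rw [hs, hl])
  have hmoves : ∀ r, (∃ i, r = a i) ∨ β r = α r := by
    intro r
    by_cases h : ∃ i, r = a i
    · exact Or.inl h
    · push_neg at h
      exact Or.inr (hβr r h)
  have hmove_eq : ∀ (r : R), β r ≠ α r → ∃ i, r = a i := by
    intro r hr
    rcases hmoves r with h | h
    · exact h
    · exact absurd h hr
  have hβane : ∀ i : Fin k, β (a i) ≠ α (a i) := by
    intro i
    rw [hβa, hpos]
    exact hne_succ_cast i
  refine ⟨⟨?_, ?_, ?_, ?_⟩, ?_⟩
  · -- (i) adjacency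
    intro r
    rcases hmoves r with ⟨i, rfl⟩ | h
    · right
      rw [hβa, hpos]
      exact hadj i
    · exact Or.inl h
  · -- (ii) vacating
    intro r s hrs hr hsr
    rcases hmove_eq r hr with ⟨i, rfl⟩
    have hs : α s = v i.succ := by rw [← hsr, hβa]
    obtain ⟨j, rfl⟩ := htarget i s hs
    exact hβane j
  · -- (iii) no swap
    intro r s hrs ⟨h1, h2⟩
    by_cases hr : β r = α r
    · exact hrs (hα (hr ▸ h1 : α r = α s).symm).symm
    by_cases hs : β s = α s
    · exact hrs (hα ((hs ▸ h2 : α s = α r).symm))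
    obtain ⟨i, rfl⟩ := hmove_eq r hr
    obtain ⟨j, rfl⟩ := hmove_eq s hs
    have e1 : v i.succ = v j.castSucc := by rw [← hβa, ← hpos, h1]
    have e2 : v j.succ = v i.castSucc := by rw [← hβa, ← hpos, h2]
    have := hvij i j e1
    have := hvij j i e2
    omega
  · -- (iv) no collision
    intro r s hrs hr hs h
    obtain ⟨i, rfl⟩ := hmove_eq r hr
    obtain ⟨j, rfl⟩ := hmove_eq s hs
    rw [hβa, hβa] at h
    have hij : i = j := Fin.succ_injective _ (hv h)
    exact hrs (by rw [hij])
  · -- injectivity of β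
    intro r s h
    rcases hmoves r with ⟨i, rfl⟩ | hr
    · rcases hmoves s with ⟨j, rfl⟩ | hs
      · rw [hβa, hβa] at h
        exact congrArg a (Fin.succ_injective _ (hv h))
      · have hαs : α s = v i.succ := by rw [← hs, ← h, hβa]
        obtain ⟨j, rfl⟩ := htarget i s hαs
        exact absurd hs (hβane j)
    · rcases hmoves s with ⟨j, rfl⟩ | hs
      · have hαr : α r = v j.succ := by rw [← hr, h, hβa]
        obtain ⟨i, rfl⟩ := htarget j r hαr
        exact absurd hr (hβane i)
      · exact hα (by rw [← hr, ← hs, h])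
end

section
/- Order invariance on a path graph: let G be the path graph on vertices {0, 1, …, n−1} with i adjacent to j iff |i − j| = 1, and let (α_t)_{t∈ℕ} be a play in the APP movement model on G. Then for any two agents r and s with α_0(r) < α_0(s), it holds that α_t(r) < α_t(s) for every time step t; in particular, two agents can never exchange their positions (relative order) on a path. -/
/-- The path graph on vertices `{0, 1, …, n-1}`: `i` and `j` are adjacent iff `|i - j| = 1`. -/
def pathG (n : ℕ) : SimpleGraph (Fin n) where
  Adj i j := i.val + 1 = j.val ∨ j.val + 1 = i.val
  symm := ⟨fun _ _ h => h.symm⟩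
  loopless := ⟨fun i h => by rcases h with h | h <;> omega⟩

/-!
On a path every agent moves by at most one vertex per step, so two agents can reverse their
order only by landing on the same vertex or by swapping across an edge, and a legal move
allows neither.
-/

namespace LegalMove

variable {R : Type*}

theorem apply_ne_apply {V : Type*} {G : SimpleGraph V} {α β : R → V} (hm : LegalMove G α β)
    {r s : R} (h : α r ≠ α s) : β r ≠ β s := by
  obtain ⟨-, hvacate, -, hcollide⟩ := hm
  have hrs : r ≠ s := fun e => h (congrArg α e)
  intro heq
  by_cases hr : β r = α r
  · exact hvacate s r hrs.symm (heq ▸ hr ▸ h) (heq ▸ hr) hr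
  by_cases hs : β s = α s
  · exact hvacate r s hrs hr (heq ▸ hs) hs
  exact hcollide r s hrs hr hs heq

theorem val_le_add_one_pathG {n : ℕ} {α β : R → Fin n} (hm : LegalMove (pathG n) α β)
    (r : R) : (β r : ℕ) ≤ α r + 1 ∧ (α r : ℕ) ≤ β r + 1 := by
  rcases hm.1 r with hr | hr
  · rw [hr]; omega
  · simp only [pathG] at hr; omega

theorem lt_of_lt_pathG {n : ℕ} {α β : R → Fin n} (hm : LegalMove (pathG n) α β) {r s : R}
    (h : α r < α s) : β r < β s := by
  by_contra hge
  have hrs : r ≠ s := fun e => (e ▸ h).false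
  obtain ⟨hr₁, hr₂⟩ := hm.val_le_add_one_pathG r
  obtain ⟨hs₁, hs₂⟩ := hm.val_le_add_one_pathG s
  have hlt : (α r : ℕ) < α s := h
  have hle : (β s : ℕ) ≤ β r := not_lt.mp hge
  have hmeet_or_swap : β r = β s ∨ (β r = α s ∧ β s = α r) := by
    by_cases heq : (β r : ℕ) = β s
    · exact .inl (Fin.ext heq)
    · exact .inr ⟨Fin.ext (by omega), Fin.ext (by omega)⟩
  rcases hmeet_or_swap with hmeet | hswap
  · exact hm.apply_ne_apply h.ne hmeet
  · exact hm.2.2.1 r s hrs hswap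

end LegalMove

theorem path_order_invariance_general {n : ℕ} {R : Type*}
    (α : ℕ → R → Fin n) (h : IsPlay (pathG n) α)
    (r s : R) (hrs : α 0 r < α 0 s) (t : ℕ) :
    α t r < α t s := by
  induction t with
  | zero => exact hrs
  | succ t ih => exact (h.2 t).lt_of_lt_pathG ih

/-- Order invariance on a path graph: two agents can never exchange their relative order. -/
theorem path_order_invariance {n : ℕ} {R : Type*} [Fintype R]
    (α : ℕ → R → Fin n) (h : IsPlay (pathG n) α)
    (r s : R) (hrs : α 0 r < α 0 s) (t : ℕ) :
    α t r < α t s :=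
  path_order_invariance_general α h r s hrs t
end
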